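/- arXiv:2409.03323 — 2 statements merged into one kernel-verified Lean document; each statement's English description precedes it below -/
import Mathlib

section
/- For all integers r ≥ 3 and n ≥ 2r−1 such that r−1 does not divide n−1, there exists no n-vertex connected BP_3-free r-uniform hypergraph. -/
namespace Berge

def IsBergePath {n : ℕ} (E : Finset (Finset (Fin n))) (k : ℕ)
    (v : Fin (k + 1) → Fin n) (f : Fin k → Finset (Fin n)) : Prop :=
  Function.Injective v ∧ Function.Injective f ∧ (∀ i, f i ∈ E) ∧
    ∀ i : Fin k, v i.castSucc ∈ f i ∧ v i.succ ∈ f i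

def HasBergePath {n : ℕ} (E : Finset (Finset (Fin n))) (k : ℕ) : Prop :=
  ∃ v f, IsBergePath E k v f

def BPFree {n : ℕ} (E : Finset (Finset (Fin n))) (k : ℕ) : Prop :=
  ¬ HasBergePath E k

def Connected {n : ℕ} (E : Finset (Finset (Fin n))) : Prop :=
  ∀ x y : Fin n, ∃ (k : ℕ) (v : Fin (k + 1) → Fin n) (f : Fin k → Finset (Fin n)),
    IsBergePath E k v f ∧ (∃ i, v i = x) ∧ (∃ i, v i = y)

def Uniform {n : ℕ} (E : Finset (Finset (Fin n))) (r : ℕ) : Prop :=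
  ∀ e ∈ E, e.card = r

noncomputable def exConn (n r k : ℕ) : ℕ :=
  sSup {m | ∃ E : Finset (Finset (Fin n)),
    Uniform E r ∧ Connected E ∧ BPFree E k ∧ E.card = m}

def IsBergeCycle {n : ℕ} (E : Finset (Finset (Fin n))) (k : ℕ)
    (v : Fin k → Fin n) (f : Fin k → Finset (Fin n)) : Prop :=
  Function.Injective v ∧ Function.Injective f ∧ (∀ i, f i ∈ E) ∧
    ∀ i : Fin k, v i ∈ f i ∧ v ⟨(i.val + 1) % k, Nat.mod_lt _ i.pos⟩ ∈ f i

/-!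
In a connected BP₃-free hypergraph any two vertices are joined by a Berge path of length at most
two. The key observation is that when all edges have at least three vertices, three distinct edges
`e₁, e₂, e₃` with distinct vertices `b ∈ e₁ ∩ e₂`, `c ∈ e₂ ∩ e₃` always extend to a Berge path of
length three. Hence any two edges meet; two edges sharing two vertices leave no room for a third
edge, and then cover at most `2r - 2 < n` vertices; and all pairwise intersections are one and the
same vertex `c`. So the hypergraph is a star centred at `c`: the sets `e \ {c}` partition the
remaining `n - 1` vertices into blocks of size `r - 1`.
-/

section

variable {n : ℕ} {E : Finset (Finset (Fin n))}

theorem HasBergePath.mono {k l : ℕ} (hkl : k ≤ l) (h : HasBergePath E l) : HasBergePath E k := by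
  obtain ⟨v, f, hv, hf, hfE, hvf⟩ := h
  exact ⟨v ∘ Fin.castLE (by omega), f ∘ Fin.castLE hkl, hv.comp (Fin.castLE_injective _),
    hf.comp (Fin.castLE_injective _), fun i => hfE _, fun i => hvf (Fin.castLE hkl i)⟩

theorem Connected.exists_mem (hC : Connected E) (hn : 1 < n) (x : Fin n) : ∃ e ∈ E, x ∈ e := by
  obtain ⟨y, hyx⟩ := Fintype.exists_ne_of_one_lt_card (by simpa using hn) x
  obtain ⟨k, v, f, ⟨-, -, hfE, hvf⟩, ⟨i, rfl⟩, ⟨j, rfl⟩⟩ := hC x y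
  cases k with
  | zero => exact absurd (congrArg v (Subsingleton.elim (α := Fin 1) j i)) hyx
  | succ k =>
    induction i using Fin.lastCases with
    | last => exact ⟨f (Fin.last k), hfE _, (hvf _).2⟩
    | cast i => exact ⟨f i, hfE i, (hvf i).1⟩

theorem Connected.exists_short_path (hC : Connected E) (hF : BPFree E 3) {x y : Fin n}
    (hxy : x ≠ y) :
    (∃ g ∈ E, x ∈ g ∧ y ∈ g) ∨
      ∃ g ∈ E, ∃ h ∈ E, g ≠ h ∧ ∃ m, m ≠ x ∧ m ≠ y ∧ x ∈ g ∧ m ∈ g ∧ m ∈ h ∧ y ∈ h := by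
  obtain ⟨k, v, f, hp, ⟨i, rfl⟩, ⟨j, rfl⟩⟩ := hC x y
  have hk : k ≤ 2 := by
    by_contra! hk
    exact hF (HasBergePath.mono hk ⟨v, f, hp⟩)
  obtain ⟨hv, hf, hfE, hvf⟩ := hp
  have hij : i ≠ j := fun h => hxy (h ▸ rfl)
  interval_cases k
  · exact absurd (Subsingleton.elim (α := Fin 1) i j) hij
  · left
    refine ⟨f 0, hfE 0, ?_⟩
    fin_cases i <;> fin_cases j <;> first | exact absurd rfl hij | exact (hvf 0).symm | exact hvf 0
  · have hv01 : v 0 ≠ v 1 := hv.ne (by decide)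
    have hv12 : v 1 ≠ v 2 := hv.ne (by decide)
    have hf01 : f 0 ≠ f 1 := hf.ne (by decide)
    fin_cases i <;> fin_cases j
    · exact absurd rfl hij
    · exact .inl ⟨f 0, hfE 0, hvf 0⟩
    · exact .inr ⟨f 0, hfE 0, f 1, hfE 1, hf01, v 1, hv01.symm, hv12, (hvf 0).1, (hvf 0).2,
        (hvf 1).1, (hvf 1).2⟩
    · exact .inl ⟨f 0, hfE 0, (hvf 0).symm⟩
    · exact absurd rfl hij
    · exact .inl ⟨f 1, hfE 1, hvf 1⟩
    · exact .inr ⟨f 1, hfE 1, f 0, hfE 0, hf01.symm, v 1, hv12, hv01.symm, (hvf 1).2, (hvf 1).1,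
        (hvf 0).2, (hvf 0).1⟩
    · exact .inl ⟨f 1, hfE 1, (hvf 1).symm⟩
    · exact absurd rfl hij

theorem BPFree.eq_of_mem_inter_of_mem_inter (hF : BPFree E 3) {e₁ e₂ e₃ : Finset (Fin n)}
    (he₁ : e₁ ∈ E) (he₂ : e₂ ∈ E) (he₃ : e₃ ∈ E) (hcard₁ : 3 ≤ e₁.card) (hcard₃ : 3 ≤ e₃.card)
    (h₁₂ : e₁ ≠ e₂) (h₂₃ : e₂ ≠ e₃) {b c : Fin n} (hb : b ∈ e₁ ∩ e₂) (hc : c ∈ e₂ ∩ e₃)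
    (hbc : b ≠ c) : e₁ = e₃ := by
  by_contra h₁₃
  obtain ⟨hb₁, hb₂⟩ := Finset.mem_inter.1 hb
  obtain ⟨hc₂, hc₃⟩ := Finset.mem_inter.1 hc
  have no_path : ∀ a ∈ e₁, ∀ d ∈ e₃, a ≠ b → a ≠ c → a ≠ d → b ≠ d → c ≠ d → False := by
    intro a ha d hd hab hac had hbd hcd
    refine hF ⟨![a, b, c, d], ![e₁, e₂, e₃], ?_, ?_, ?_, ?_⟩
    · intro i j hij
      fin_cases i <;> fin_cases j <;> simp_all
    · intro i j hij
      fin_cases i <;> fin_cases j <;> simp_all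
    · intro i
      fin_cases i <;> assumption
    · intro i
      fin_cases i
      exacts [⟨ha, hb₁⟩, ⟨hb₂, hc₂⟩, ⟨hc₃, hd⟩]
  have exists_outside : ∀ e : Finset (Fin n), 3 ≤ e.card → ∀ a, e ≠ {a, b, c} →
      ∃ x ∈ e, x ≠ a ∧ x ≠ b ∧ x ≠ c := by
    intro e he a hne
    obtain ⟨x, hx, hxabc⟩ := Finset.not_subset.1 fun hsub =>
      hne (Finset.eq_of_subset_of_card_le hsub (Finset.card_le_three.trans he))
    simp only [Finset.mem_insert, Finset.mem_singleton, not_or] at hxabc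
    exact ⟨x, hx, hxabc⟩
  obtain ⟨a, ha, hbca⟩ := Finset.exists_mem_notMem_of_card_lt_card
    (Finset.card_le_two.trans_lt hcard₁ : ({b, c} : Finset (Fin n)).card < e₁.card)
  simp only [Finset.mem_insert, Finset.mem_singleton, not_or] at hbca
  by_cases he₃ : e₃ = {a, b, c}
  · -- then `e₃` contains `a`, and `e₁ ≠ e₃` supplies a fourth vertex in `e₁` instead
    obtain ⟨a', ha', ha'a, ha'b, ha'c⟩ := exists_outside e₁ hcard₁ a (he₃ ▸ h₁₃)
    exact no_path a' ha' a (by simp [he₃]) ha'b ha'c ha'a (Ne.symm hbca.1) (Ne.symm hbca.2)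
  · obtain ⟨d, hd, hda, hdb, hdc⟩ := exists_outside e₃ hcard₃ a he₃
    exact no_path a ha d hd hbca.1 hbca.2 hda.symm hdb.symm hdc.symm

theorem BPFree.inter_nonempty (hF : BPFree E 3) (hC : Connected E) (h3 : ∀ e ∈ E, 3 ≤ e.card)
    {e f : Finset (Fin n)} (he : e ∈ E) (hf : f ∈ E) : (e ∩ f).Nonempty := by
  rw [Finset.nonempty_iff_ne_empty, Ne, ← Finset.disjoint_iff_inter_eq_empty]
  intro hef
  obtain ⟨x, hx⟩ := Finset.card_pos.1 (by linarith [h3 e he])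
  obtain ⟨y, hy⟩ := Finset.card_pos.1 (by linarith [h3 f hf])
  have hxf : x ∉ f := Finset.disjoint_left.1 hef hx
  have hye : y ∉ e := Finset.disjoint_right.1 hef hy
  have hxy : x ≠ y := fun h => hxf (h ▸ hy)
  rcases hC.exists_short_path hF hxy with
    ⟨g, hg, hxg, hyg⟩ | ⟨g, hg, h, hh, hgh, m, hmx, hmy, hxg, hmg, hmh, hyh⟩
  · have := hF.eq_of_mem_inter_of_mem_inter he hg hf (h3 e he) (h3 f hf)
      (fun h => hye (h ▸ hyg)) (fun h => hxf (h ▸ hxg))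
      (Finset.mem_inter.2 ⟨hx, hxg⟩) (Finset.mem_inter.2 ⟨hyg, hy⟩) hxy
    exact hxf (this ▸ hx)
  · rcases eq_or_ne g e with rfl | hge
    · have hhf : h ≠ f := fun h => Finset.disjoint_left.1 hef hmg (h ▸ hmh)
      have := hF.eq_of_mem_inter_of_mem_inter hg hh hf (h3 g hg) (h3 f hf) hgh hhf
        (Finset.mem_inter.2 ⟨hmg, hmh⟩) (Finset.mem_inter.2 ⟨hyh, hy⟩) hmy
      exact hxf (this ▸ hx)
    · have := hF.eq_of_mem_inter_of_mem_inter he hg hh (h3 e he) (h3 h hh) hge.symm hgh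
        (Finset.mem_inter.2 ⟨hx, hxg⟩) (Finset.mem_inter.2 ⟨hmg, hmh⟩) hmx.symm
      exact hye (this ▸ hyh)

theorem BPFree.card_inter_eq_one (hF : BPFree E 3) (hC : Connected E) {r : ℕ}
    (hU : Uniform E r) (hr : 3 ≤ r) (hn : 2 * r ≤ n + 1) {e f : Finset (Fin n)}
    (he : e ∈ E) (hf : f ∈ E) (hef : e ≠ f) : (e ∩ f).card = 1 := by
  have h3 : ∀ g ∈ E, 3 ≤ g.card := fun g hg => hU g hg ▸ hr
  refine le_antisymm ?_ (Finset.card_pos.2 (hF.inter_nonempty hC h3 he hf))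
  by_contra! h2
  by_cases hthird : ∃ g ∈ E, g ≠ e ∧ g ≠ f
  · obtain ⟨g, hg, hge, hgf⟩ := hthird
    obtain ⟨w, hw⟩ := hF.inter_nonempty hC h3 he hg
    obtain ⟨q, hq, hqw⟩ := Finset.exists_mem_ne h2 w
    exact hgf (hF.eq_of_mem_inter_of_mem_inter hf he hg (h3 f hf) (h3 g hg) hef.symm hge.symm
      (Finset.inter_comm e f ▸ hq) hw hqw).symm
  · push Not at hthird
    have hcover : Finset.univ ⊆ e ∪ f := fun x _ => by
      obtain ⟨g, hg, hxg⟩ := hC.exists_mem (by omega) x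
      rcases eq_or_ne g e with rfl | hge
      · exact Finset.mem_union_left _ hxg
      · exact Finset.mem_union_right _ (hthird g hg hge ▸ hxg)
    have := Finset.card_le_card hcover
    rw [Finset.card_univ, Fintype.card_fin, ← Nat.add_le_add_iff_right (n := (e ∩ f).card),
      Finset.card_union_add_card_inter, hU e he, hU f hf] at this
    omega

theorem BPFree.exists_star_center (hF : BPFree E 3) (hC : Connected E) {r : ℕ}
    (hU : Uniform E r) (hr : 3 ≤ r) (hn : 2 * r ≤ n + 1) :
    ∃ c, (∀ e ∈ E, c ∈ e) ∧ ∀ e ∈ E, ∀ f ∈ E, e ≠ f → e ∩ f ⊆ {c} := by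
  have h3 : ∀ g ∈ E, 3 ≤ g.card := fun g hg => hU g hg ▸ hr
  obtain ⟨e₀, he₀, -⟩ := hC.exists_mem (by omega) ⟨0, by omega⟩
  by_cases hsingle : ∀ e ∈ E, e = e₀
  · obtain ⟨c, hc⟩ := Finset.card_pos.1 (by linarith [h3 e₀ he₀])
    exact ⟨c, fun e he => hsingle e he ▸ hc,
      fun e he f hf hef => absurd ((hsingle e he).trans (hsingle f hf).symm) hef⟩
  push Not at hsingle
  obtain ⟨e₁, he₁, h₁₀⟩ := hsingle
  obtain ⟨c, hc⟩ := Finset.card_eq_one.1 (hF.card_inter_eq_one hC hU hr hn he₀ he₁ h₁₀.symm)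
  have hc₀₁ : c ∈ e₀ ∩ e₁ := hc ▸ Finset.mem_singleton_self c
  have hcE : ∀ g ∈ E, c ∈ g := by
    intro g hg
    rcases eq_or_ne g e₀ with rfl | hg₀
    · exact (Finset.mem_inter.1 hc₀₁).1
    rcases eq_or_ne g e₁ with rfl | hg₁
    · exact (Finset.mem_inter.1 hc₀₁).2
    obtain ⟨y, hy⟩ := hF.inter_nonempty hC h3 he₀ hg
    by_contra hcg
    exact hg₁ (hF.eq_of_mem_inter_of_mem_inter he₁ he₀ hg (h3 e₁ he₁) (h3 g hg) h₁₀ hg₀.symm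
      (Finset.inter_comm e₀ e₁ ▸ hc₀₁) hy
      fun h => hcg (by rw [h]; exact (Finset.mem_inter.1 hy).2)).symm
  refine ⟨c, hcE, fun e he f hf hef x hx => Finset.mem_singleton.2 ?_⟩
  exact Finset.card_le_one.1 (hF.card_inter_eq_one hC hU hr hn he hf hef).le x hx c
    (Finset.mem_inter.2 ⟨hcE e he, hcE f hf⟩)

end

theorem card_sub_one_eq_of_star {α : Type*} [Fintype α] [DecidableEq α] {E : Finset (Finset α)}
    {c : α} {r : ℕ} (hcover : ∀ x, ∃ e ∈ E, x ∈ e) (hc : ∀ e ∈ E, c ∈ e)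
    (hr : ∀ e ∈ E, e.card = r) (hinter : ∀ e ∈ E, ∀ f ∈ E, e ≠ f → e ∩ f ⊆ {c}) :
    Fintype.card α - 1 = E.card * (r - 1) := by
  have hpetals : E.biUnion (·.erase c) = Finset.univ.erase c := by
    ext x
    simp only [Finset.mem_biUnion, Finset.mem_erase, Finset.mem_univ, and_true]
    refine ⟨fun ⟨_, _, hxc, _⟩ => hxc, fun hxc => ?_⟩
    obtain ⟨e, he, hxe⟩ := hcover x
    exact ⟨e, he, hxc, hxe⟩
  have hdisj : (E : Set (Finset α)).PairwiseDisjoint (·.erase c) := by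
    intro e he f hf hef
    refine Finset.disjoint_left.2 fun x hxe hxf => Finset.ne_of_mem_erase hxe ?_
    exact Finset.mem_singleton.1 (hinter e he f hf hef
      (Finset.mem_inter.2 ⟨Finset.mem_of_mem_erase hxe, Finset.mem_of_mem_erase hxf⟩))
  calc Fintype.card α - 1 = (Finset.univ.erase c).card := by
        rw [Finset.card_erase_of_mem (Finset.mem_univ c), Finset.card_univ]
    _ = ∑ e ∈ E, (e.erase c).card := by rw [← hpetals, Finset.card_biUnion hdisj]
    _ = E.card * (r - 1) := by
        rw [Finset.sum_congr rfl fun e he => by rw [Finset.card_erase_of_mem (hc e he), hr e he],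
          Finset.sum_const, smul_eq_mul]

theorem stmt2 (r n : ℕ) (hr : 3 ≤ r) (hn : 2 * r - 1 ≤ n) (hndvd : ¬ (r - 1) ∣ (n - 1)) :
    ¬ ∃ E : Finset (Finset (Fin n)), Uniform E r ∧ Connected E ∧ BPFree E 3 := by
  rintro ⟨E, hU, hC, hF⟩
  obtain ⟨c, hc, hinter⟩ := hF.exists_star_center hC hU hr (by omega)
  have hcount := card_sub_one_eq_of_star (hC.exists_mem (by omega)) hc hU hinter
  rw [Fintype.card_fin] at hcount
  exact hndvd ⟨E.card, by rw [hcount, mul_comm]⟩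

end Berge
end

section
/- For all integers r and k with r ≥ 3 and r+1 ≤ k ≤ 2r−1, there exists an integer N such that for all n ≥ N there exists an n-vertex connected BP_k-free r-uniform hypergraph with exactly n − (k−2) + C(k−2, r) hyperedges, where C(k−2, r) is the binomial coefficient; consequently ex^conn_r(n,BP_k) ≥ n − (k−2) + C(k−2, r) for all n ≥ N. -/
namespace Berge

/-!
Take a set `A` of `k - 2` vertices carrying the complete `r`-graph, a set `B ⊆ A` of `r - 1`
vertices, and hang one pendant edge `insert w B` on each vertex `w ∉ A`. This has
`n - (k - 2) + C(k - 2, r)` edges, and every two vertices are joined through a vertex of `B`.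
A vertex outside `A` lies in a single edge, so it can only be an end of a Berge path;
hence a Berge path has at most `(k - 2) + 2` vertices, i.e. length at most `k - 1`.
-/

variable {n : ℕ}

section BergePath

variable {E : Finset (Finset (Fin n))} {k : ℕ} {v : Fin (k + 1) → Fin n}
  {f : Fin k → Finset (Fin n)} {S : Finset (Fin n)}

lemma IsBergePath.mem_of_ne_zero_of_ne_last (hp : IsBergePath E k v f)
    (hS : ∀ x ∉ S, ∀ e₁ ∈ E, ∀ e₂ ∈ E, x ∈ e₁ → x ∈ e₂ → e₁ = e₂)
    {i : Fin (k + 1)} (h0 : i ≠ 0) (hl : i ≠ Fin.last k) : v i ∈ S := by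
  obtain ⟨a, rfl⟩ := Fin.exists_succ_eq.2 h0
  obtain ⟨b, hb⟩ := Fin.exists_castSucc_eq.2 hl
  obtain ⟨-, hf, hfE, hvf⟩ := hp
  by_contra hvS
  have hab : a = b := hf (hS _ hvS _ (hfE a) _ (hfE b) (hvf a).2 (hb ▸ (hvf b).1))
  have := congrArg Fin.val hb
  simp [hab] at this

lemma IsBergePath.le_card_add_one (hp : IsBergePath E k v f)
    (hS : ∀ x ∉ S, ∀ e₁ ∈ E, ∀ e₂ ∈ E, x ∈ e₁ → x ∈ e₂ → e₁ = e₂) : k ≤ S.card + 1 := by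
  have hsub : Finset.univ.image v ⊆ S ∪ {v 0, v (Fin.last k)} := by
    intro x hx
    obtain ⟨i, -, rfl⟩ := Finset.mem_image.1 hx
    by_cases h0 : i = 0
    · simp [h0]
    by_cases hl : i = Fin.last k
    · simp [hl]
    exact Finset.mem_union_left _ (hp.mem_of_ne_zero_of_ne_last hS h0 hl)
  suffices k + 1 ≤ S.card + 2 by omega
  calc k + 1 = (Finset.univ.image v).card := by
        rw [Finset.card_image_of_injective _ hp.1, Finset.card_fin]
    _ ≤ (S ∪ {v 0, v (Fin.last k)}).card := Finset.card_le_card hsub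
    _ ≤ S.card + 2 := (Finset.card_union_le _ _).trans (by grw [Finset.card_le_two])

lemma bpFree_of_card_add_two_le
    (hS : ∀ x ∉ S, ∀ e₁ ∈ E, ∀ e₂ ∈ E, x ∈ e₁ → x ∈ e₂ → e₁ = e₂) (hk : S.card + 2 ≤ k) :
    BPFree E k := by
  rintro ⟨v, f, hp⟩
  have := hp.le_card_add_one hS
  omega

end BergePath

section Connected

variable {E : Finset (Finset (Fin n))} {x y z : Fin n} {e e' : Finset (Fin n)}

lemma isBergePath_zero (x : Fin n) : IsBergePath E 0 (fun _ => x) Fin.elim0 :=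
  ⟨fun a b _ => Subsingleton.elim (α := Fin 1) a b, fun a => a.elim0, fun a => a.elim0,
    fun a => a.elim0⟩

lemma isBergePath_one (hxy : x ≠ y) (he : e ∈ E) (hx : x ∈ e) (hy : y ∈ e) :
    IsBergePath E 1 ![x, y] ![e] := by
  refine ⟨?_, fun a b _ => Subsingleton.elim a b, ?_, ?_⟩
  · intro i j; fin_cases i <;> fin_cases j <;> simp_all [eq_comm]
  all_goals intro i; fin_cases i; simp_all

lemma isBergePath_two (hxy : x ≠ y) (hxz : x ≠ z) (hyz : y ≠ z) (hee' : e ≠ e')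
    (he : e ∈ E) (he' : e' ∈ E) (hx : x ∈ e) (hy : y ∈ e) (hy' : y ∈ e') (hz : z ∈ e') :
    IsBergePath E 2 ![x, y, z] ![e, e'] := by
  refine ⟨?_, ?_, ?_, ?_⟩
  · intro i j; fin_cases i <;> fin_cases j <;> simp_all [eq_comm]
  · intro i j; fin_cases i <;> fin_cases j <;> simp_all [eq_comm]
  all_goals intro i; fin_cases i <;> simp_all

lemma connected_of_forall_exists_mem (v₀ : Fin n) (h : ∀ z, ∃ e ∈ E, z ∈ e ∧ v₀ ∈ e) :
    Connected E := by
  intro x y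
  by_cases hxy : x = y
  · exact ⟨0, _, _, isBergePath_zero x, ⟨0, rfl⟩, ⟨0, hxy⟩⟩
  by_cases hshared : ∃ e ∈ E, x ∈ e ∧ y ∈ e
  · obtain ⟨e, he, hx, hy⟩ := hshared
    exact ⟨1, _, _, isBergePath_one hxy he hx hy, ⟨0, rfl⟩, ⟨1, rfl⟩⟩
  push Not at hshared
  obtain ⟨ex, hex, hx, hx₀⟩ := h x
  obtain ⟨ey, hey, hy, hy₀⟩ := h y
  have hx₀' : x ≠ v₀ := by rintro rfl; exact hshared ey hey hy₀ hy
  have hy₀' : v₀ ≠ y := by rintro rfl; exact hshared ex hex hx hx₀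
  have hexy : ex ≠ ey := by rintro rfl; exact hshared ex hex hx hy
  exact ⟨2, _, _, isBergePath_two hx₀' hxy hy₀' hexy hex hey hx hx₀ hy₀ hy, ⟨0, rfl⟩, ⟨2, rfl⟩⟩

end Connected

lemma card_le_exConn {E : Finset (Finset (Fin n))} {r k : ℕ} (hu : Uniform E r)
    (hc : Connected E) (hf : BPFree E k) : E.card ≤ exConn n r k :=
  le_csSup ⟨Fintype.card (Finset (Fin n)), by
    rintro _ ⟨E', -, -, -, rfl⟩
    exact Finset.card_le_univ _⟩ ⟨E, hu, hc, hf, rfl⟩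

def cliqueWithPendants (A B : Finset (Fin n)) (r : ℕ) : Finset (Finset (Fin n)) :=
  A.powersetCard r ∪ Aᶜ.image (insert · B)

namespace cliqueWithPendants

variable {A B : Finset (Fin n)} {r : ℕ}

lemma pendant_mem (w : Fin n) (hw : w ∉ A) : insert w B ∈ cliqueWithPendants A B r :=
  Finset.mem_union_right _ (Finset.mem_image_of_mem _ (Finset.mem_compl.2 hw))

lemma eq_insert_of_notMem (hBA : B ⊆ A) {x : Fin n} (hx : x ∉ A) {e : Finset (Fin n)}
    (he : e ∈ cliqueWithPendants A B r) (hxe : x ∈ e) : e = insert x B := by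
  rcases Finset.mem_union.1 he with he | he
  · exact absurd ((Finset.mem_powersetCard.1 he).1 hxe) hx
  obtain ⟨w, -, rfl⟩ := Finset.mem_image.1 he
  rcases Finset.mem_insert.1 hxe with rfl | hxB
  · rfl
  · exact absurd (hBA hxB) hx

lemma uniform (hBA : B ⊆ A) (hB : B.card + 1 = r) : Uniform (cliqueWithPendants A B r) r := by
  intro e he
  rcases Finset.mem_union.1 he with he | he
  · exact (Finset.mem_powersetCard.1 he).2
  obtain ⟨w, hw, rfl⟩ := Finset.mem_image.1 he
  rw [Finset.card_insert_of_notMem fun hwB => Finset.mem_compl.1 hw (hBA hwB), hB]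

lemma card_eq (hBA : B ⊆ A) : (cliqueWithPendants A B r).card = Aᶜ.card + A.card.choose r := by
  have hdisj : Disjoint (A.powersetCard r) (Aᶜ.image (insert · B)) := by
    refine Finset.disjoint_right.2 fun e he hsub => ?_
    obtain ⟨w, hw, rfl⟩ := Finset.mem_image.1 he
    exact Finset.mem_compl.1 hw ((Finset.mem_powersetCard.1 hsub).1 (Finset.mem_insert_self _ _))
  have hinj : Set.InjOn (insert · B) (Aᶜ : Finset (Fin n)) :=
    fun w hw w' hw' (h : insert w B = insert w' B) =>
      (Finset.mem_insert.1 (h ▸ Finset.mem_insert_self w B : w ∈ insert w' B)).resolve_right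
        fun hwB => Finset.mem_compl.1 hw (hBA hwB)
  rw [cliqueWithPendants, Finset.card_union_of_disjoint hdisj, Finset.card_powersetCard,
    Finset.card_image_of_injOn hinj, add_comm]

lemma exists_mem_mem (hBA : B ⊆ A) (hB : B.card + 1 = r) {v₀ : Fin n} (hv₀ : v₀ ∈ B)
    (hA : Aᶜ.Nonempty) (z : Fin n) : ∃ e ∈ cliqueWithPendants A B r, z ∈ e ∧ v₀ ∈ e := by
  by_cases hzB : z ∈ B
  · obtain ⟨w, hw⟩ := hA
    exact ⟨_, pendant_mem w (Finset.mem_compl.1 hw), Finset.mem_insert_of_mem hzB,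
      Finset.mem_insert_of_mem hv₀⟩
  by_cases hzA : z ∈ A
  · -- `B ⊊ A`, so `A` has room for an `r`-set through `z` and `v₀`
    have hrA : r ≤ A.card := hB ▸ Finset.card_lt_card (Finset.ssubset_iff_subset_ne.2
      ⟨hBA, by rintro rfl; exact hzB hzA⟩)
    have hpair : ({z, v₀} : Finset (Fin n)).card ≤ r :=
      Finset.card_le_two.trans (by have := Finset.card_pos.2 ⟨v₀, hv₀⟩; omega)
    obtain ⟨e, hze, heA, her⟩ := Finset.exists_subsuperset_card_eq
      (Finset.insert_subset hzA (Finset.singleton_subset_iff.2 (hBA hv₀))) hpair hrA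
    exact ⟨e, Finset.mem_union_left _ (Finset.mem_powersetCard.2 ⟨heA, her⟩),
      hze (by simp), hze (by simp)⟩
  · exact ⟨_, pendant_mem z hzA, Finset.mem_insert_self _ _, Finset.mem_insert_of_mem hv₀⟩

end cliqueWithPendants

theorem stmt19_general (r k : ℕ) (hr : 3 ≤ r) (hk1 : r + 1 ≤ k) :
    ∃ N : ℕ, ∀ n : ℕ, N ≤ n →
      (∃ E : Finset (Finset (Fin n)), Uniform E r ∧ Connected E ∧ BPFree E k ∧
        E.card = n - (k - 2) + Nat.choose (k - 2) r) ∧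
      n - (k - 2) + Nat.choose (k - 2) r ≤ exConn n r k := by
  refine ⟨k, fun n hn => ?_⟩
  set A : Finset (Fin n) := {x | x < k - 2}
  set B : Finset (Fin n) := {x | x < r - 1}
  have hBA : B ⊆ A := fun x hx => by simp only [A, B, Finset.mem_filter_univ] at hx ⊢; omega
  have hA : A.card = k - 2 := by simp [A, Fin.card_filter_val_lt]; omega
  have hB : B.card + 1 = r := by simp [B, Fin.card_filter_val_lt]; omega
  set E := cliqueWithPendants A B r
  have hE : E.card = n - (k - 2) + (k - 2).choose r := by
    rw [cliqueWithPendants.card_eq hBA, Finset.card_compl, Fintype.card_fin, hA]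
  have hconn : Connected E := by
    refine connected_of_forall_exists_mem ⟨0, by omega⟩ fun z =>
      cliqueWithPendants.exists_mem_mem hBA hB (by simp [B]; omega) ⟨⟨n - 1, by omega⟩, ?_⟩ z
    simp [A]; omega
  have hfree : BPFree E k := bpFree_of_card_add_two_le (fun x hx e₁ he₁ e₂ he₂ hx₁ hx₂ =>
    (cliqueWithPendants.eq_insert_of_notMem hBA hx he₁ hx₁).trans
      (cliqueWithPendants.eq_insert_of_notMem hBA hx he₂ hx₂).symm) (by omega)
  have hunif := cliqueWithPendants.uniform hBA hB
  exact ⟨⟨E, hunif, hconn, hfree, hE⟩, hE ▸ card_le_exConn hunif hconn hfree⟩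

theorem stmt19 (r k : ℕ) (hr : 3 ≤ r) (hk1 : r + 1 ≤ k) (hk2 : k ≤ 2 * r - 1) :
    ∃ N : ℕ, ∀ n : ℕ, N ≤ n →
      (∃ E : Finset (Finset (Fin n)), Uniform E r ∧ Connected E ∧ BPFree E k ∧
        E.card = n - (k - 2) + Nat.choose (k - 2) r) ∧
      n - (k - 2) + Nat.choose (k - 2) r ≤ exConn n r k :=
  stmt19_general r k hr hk1

end Berge
end
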